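/- arXiv:1904.09490 — 2 statements merged into one kernel-verified Lean document; each statement's English description precedes it below -/
import Mathlib

section
/- The centralizer of an irrational rotation R_α in the group Homeo_+(S^1) consists exactly of the rotations: if g ∈ Homeo_+(S^1) commutes with R_α where α is irrational, then g is a rotation R_β for some β. In particular this centralizer is abelian. -/
/-! `x ↦ g x - x` is continuous and invariant under the rotation by `α`, so it is constant on
the closure of an orbit, which is the whole circle since `α` is irrational. Hence `g` is the
rotation by `g 0`, and any two rotations commute. -/

open Filter Topology

/-- An orientation-preserving homeomorphism of the circle `S¹ = ℝ/ℤ`: one admitting a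
strictly monotone increasing lift `F : ℝ → ℝ` commuting with the unit translation. -/
def IsOrientationPreserving (g : (AddCircle (1:ℝ)) ≃ₜ (AddCircle (1:ℝ))) : Prop :=
  ∃ F : ℝ → ℝ, StrictMono F ∧ (∀ x, F (x + 1) = F x + 1) ∧
    ∀ x : ℝ, g (x : AddCircle (1:ℝ)) = ((F x : ℝ) : AddCircle (1:ℝ))

section DenseTranslation

variable {G X : Type*} [TopologicalSpace G] [TopologicalSpace X] [T2Space X] {a : G}

theorem Function.Periodic.eq_of_denseRange_zsmul [AddGroup G] [ContinuousAdd G] {f : G → X}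
    (hf : Continuous f) (hp : Function.Periodic f a) (hd : DenseRange (· • a : ℤ → G))
    (x y : G) : f x = f y := by
  have hconst : (fun t => f (x + t)) = fun _ => f x :=
    hd.equalizer (hf.comp (continuous_const.add continuous_id)) continuous_const
      (funext fun n => hp.zsmul n x)
  simpa using (congrFun hconst (-x + y)).symm

theorem apply_eq_add_apply_zero_of_denseRange_zsmul [AddCommGroup G] [IsTopologicalAddGroup G]
    [T2Space G] {g : G → G} (hg : Continuous g) (hga : ∀ x, g (x + a) = g x + a)
    (hd : DenseRange (· • a : ℤ → G)) (x : G) : g x = x + g 0 := by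
  have hp : Function.Periodic (fun x => g x - x) a := fun x => by
    simp only [hga]
    abel
  have hx : g x - x = g 0 - 0 := hp.eq_of_denseRange_zsmul (hg.sub continuous_id) hd x 0
  rw [sub_zero] at hx
  rw [← hx, add_sub_cancel]

end DenseTranslation

theorem AddCircle.apply_eq_add_apply_zero_of_irrational {α : ℝ} (hα : Irrational α)
    {g : AddCircle (1:ℝ) → AddCircle (1:ℝ)} (hg : Continuous g)
    (hgc : ∀ x, g (x + (α : AddCircle (1:ℝ))) = g x + (α : AddCircle (1:ℝ)))
    (x : AddCircle (1:ℝ)) : g x = x + g 0 :=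
  apply_eq_add_apply_zero_of_denseRange_zsmul hg hgc
    (AddCircle.denseRange_zsmul_coe_iff.mpr (by simpa using hα)) x

theorem stmt1_general (α : ℝ) (hα : Irrational α)
    (g : (AddCircle (1:ℝ)) ≃ₜ (AddCircle (1:ℝ)))
    (hgc : ∀ x : AddCircle (1:ℝ), g (x + (α : AddCircle (1:ℝ))) = g x + (α : AddCircle (1:ℝ))) :
    (∃ β : ℝ, ∀ x : AddCircle (1:ℝ), g x = x + (β : AddCircle (1:ℝ))) ∧
    (∀ h : (AddCircle (1:ℝ)) ≃ₜ (AddCircle (1:ℝ)), IsOrientationPreserving h →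
      (∀ x : AddCircle (1:ℝ), h (x + (α : AddCircle (1:ℝ))) = h x + (α : AddCircle (1:ℝ))) →
      ∀ x : AddCircle (1:ℝ), g (h x) = h (g x)) := by
  have hg_rot := AddCircle.apply_eq_add_apply_zero_of_irrational hα g.continuous hgc
  refine ⟨?_, fun h _ hhc x => ?_⟩
  · obtain ⟨β, hβ⟩ := QuotientAddGroup.mk_surjective (g 0)
    exact ⟨β, fun x => by rw [hg_rot x, ← hβ]⟩
  · have hh_rot := AddCircle.apply_eq_add_apply_zero_of_irrational hα h.continuous hhc
    rw [hg_rot (h x), hh_rot x, hh_rot (g x), hg_rot x, add_right_comm]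

/-- The centralizer of an irrational rotation `R_α` in `Homeo₊(S¹)` consists exactly of
rotations; in particular it is abelian. -/
theorem stmt1 (α : ℝ) (hα : Irrational α)
    (g : (AddCircle (1:ℝ)) ≃ₜ (AddCircle (1:ℝ)))
    (hg : IsOrientationPreserving g)
    (hgc : ∀ x : AddCircle (1:ℝ), g (x + (α : AddCircle (1:ℝ))) = g x + (α : AddCircle (1:ℝ))) :
    (∃ β : ℝ, ∀ x : AddCircle (1:ℝ), g x = x + (β : AddCircle (1:ℝ))) ∧
    (∀ h : (AddCircle (1:ℝ)) ≃ₜ (AddCircle (1:ℝ)), IsOrientationPreserving h →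
      (∀ x : AddCircle (1:ℝ), h (x + (α : AddCircle (1:ℝ))) = h x + (α : AddCircle (1:ℝ))) →
      ∀ x : AddCircle (1:ℝ), g (h x) = h (g x)) :=
  stmt1_general α hα g hgc
end

section
/- Let A be an open annulus and let M₁, M₂ ⊂ A be two disjoint separators. Then either M₁ ⊂ A_L(M₂) or M₁ ⊂ A_R(M₂). Moreover, if M₁ ⊂ A_L(M₂) then M₂ ⊂ A_R(M₁). -/
/-!
On a vertical line, take the highest point of `M₁ ∪ M₂`. The upward ray from it avoids the
other separator, and a connected set missing a closed set `M` lies in a single path component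
of the open set `Mᶜ` (the annulus is locally path connected), so the separator containing that
point lies in the right region of the other one. The lowest point gives the same dichotomy for
left regions. Since a separator meets every arc between the ends, its left and right regions are
disjoint, and the two dichotomies combine to the claim.
-/

open Filter Topology

/-- The open annulus `A = S¹ × ℝ` (with `S¹ = ℝ/ℤ`). -/
abbrev Ann : Type := AddCircle (1:ℝ) × ℝ

/-- A subset of the annulus is separating if every arc connecting the two ends meets it. -/
def Separating (X : Set Ann) : Prop :=
  ∀ γ : ℝ → Ann, Continuous γ →
    Tendsto (fun t => (γ t).2) atTop atTop →
    Tendsto (fun t => (γ t).2) atBot atBot →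
    ∃ t, γ t ∈ X

/-- A separator: compact, connected, separating. -/
def IsSeparator (M : Set Ann) : Prop :=
  IsCompact M ∧ IsConnected M ∧ Separating M

/-- `A_L(M)`: the set of points of `A − M` that can be joined to the left end
(`y → −∞`) by a path avoiding `M`. -/
def leftRegion (M : Set Ann) : Set Ann :=
  {p | p ∉ M ∧ ∃ γ : ℝ → Ann, Continuous γ ∧ γ 0 = p ∧ (∀ t, γ t ∉ M) ∧
    Tendsto (fun t => (γ t).2) atTop atBot}

/-- `A_R(M)`: the set of points of `A − M` that can be joined to the right end
(`y → +∞`) by a path avoiding `M`. -/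
def rightRegion (M : Set Ann) : Set Ann :=
  {p | p ∉ M ∧ ∃ γ : ℝ → Ann, Continuous γ ∧ γ 0 = p ∧ (∀ t, γ t ∉ M) ∧
    Tendsto (fun t => (γ t).2) atTop atTop}

instance QuotientAddGroup.locallyPathConnectedSpace {G : Type*} [AddGroup G] [TopologicalSpace G]
    [LocallyPathConnectedSpace G] (S : AddSubgroup G) : LocallyPathConnectedSpace (G ⧸ S) :=
  Quotient.locallyPathConnectedSpace

section EndRegion

variable {X : Type*} [TopologicalSpace X]

-- For `X = AddCircle 1`, `leftRegion M` and `rightRegion M` are definitionally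
-- `endRegion atBot M` and `endRegion atTop M`.
def endRegion (l : Filter ℝ) (M : Set (X × ℝ)) : Set (X × ℝ) :=
  {p | p ∉ M ∧ ∃ γ : ℝ → X × ℝ, Continuous γ ∧ γ 0 = p ∧ (∀ t, γ t ∉ M) ∧
    Tendsto (fun t => (γ t).2) atTop l}

variable {l : Filter ℝ} {M : Set (X × ℝ)}

theorem mem_endRegion_of_joinedIn {p q : X × ℝ} (hp : p ∈ endRegion l M)
    (hqp : JoinedIn Mᶜ q p) : q ∈ endRegion l M := by
  obtain ⟨-, γ, hγc, hγ0, hγM, hγl⟩ := hp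
  set σ := hqp.somePath.extend
  have hσM (t : ℝ) : σ t ∉ M := by
    obtain ⟨s, hs⟩ : σ t ∈ Set.range hqp.somePath := by
      rw [← Path.extend_range]; exact ⟨t, rfl⟩
    exact hs ▸ hqp.somePath_mem s
  refine ⟨by simpa [σ] using hσM 0, fun t => if t ≤ 1 then σ t else γ (t - 1), ?_, ?_, ?_, ?_⟩
  · refine Continuous.if_le (Path.continuous_extend _) (hγc.comp (continuous_sub_right (1 : ℝ)))
      continuous_id continuous_const fun t ht => ?_
    simp [ht, σ, hγ0]
  · simp [σ]
  · intro t
    dsimp only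
    split_ifs
    exacts [hσM t, hγM (t - 1)]
  · refine (hγl.comp (tendsto_atTop_add_const_right atTop (-1) tendsto_id)).congr' ?_
    filter_upwards [eventually_gt_atTop 1] with t ht
    simp [not_le.mpr ht, sub_eq_add_neg]

theorem IsPreconnected.subset_endRegion [LocallyPathConnectedSpace X] (hM : IsClosed M)
    {C : Set (X × ℝ)} (hC : IsPreconnected C) (hCM : Disjoint C M) {p : X × ℝ} (hpC : p ∈ C)
    (hp : p ∈ endRegion l M) : C ⊆ endRegion l M := by
  have hpM : p ∈ Mᶜ := hp.1
  set K := _root_.connectedComponentIn Mᶜ p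
  have hK : IsPathConnected K :=
    (hM.isOpen_compl.connectedComponentIn).isConnected_iff_isPathConnected.mp
      (isConnected_connectedComponentIn_iff.mpr hpM)
  have hCK : C ⊆ K :=
    hC.subset_connectedComponentIn hpC hCM.subset_compl_right
  intro q hq
  exact mem_endRegion_of_joinedIn hp ((hK.joinedIn q (hCK hq) p
    (mem_connectedComponentIn hpM)).mono (connectedComponentIn_subset _ _))

theorem mem_endRegion_atTop_of_ray {p : X × ℝ} (hp : p ∉ M)
    (hray : ∀ y, p.2 < y → (p.1, y) ∉ M) : p ∈ endRegion atTop M := by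
  refine ⟨hp, fun t => (p.1, p.2 + max t 0), by fun_prop, by simp, fun t => ?_, ?_⟩
  · rcases (le_max_right t 0).eq_or_lt with h | h
    · simpa [← h] using hp
    · exact hray _ (lt_add_of_pos_right _ h)
  · exact tendsto_atTop_add_const_left _ _ (tendsto_atTop_mono (le_max_left · 0) tendsto_id)

theorem mem_endRegion_atBot_of_ray {p : X × ℝ} (hp : p ∉ M)
    (hray : ∀ y, y < p.2 → (p.1, y) ∉ M) : p ∈ endRegion atBot M := by
  refine ⟨hp, fun t => (p.1, p.2 - max t 0), by fun_prop, by simp, fun t => ?_, ?_⟩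
  · rcases (le_max_right t 0).eq_or_lt with h | h
    · simpa [← h] using hp
    · exact hray _ (sub_lt_self _ h)
  · exact tendsto_atBot_add_const_left _ _
      (tendsto_neg_atTop_atBot.comp (tendsto_atTop_mono (le_max_left · 0) tendsto_id))

end EndRegion

section Extremal

variable {X : Type*} [TopologicalSpace X] {K : Set (X × ℝ)}

theorem IsCompact.exists_mem_notMem_above [T1Space X] (hK : IsCompact K) (hne : K.Nonempty) :
    ∃ q ∈ K, ∀ y, q.2 < y → (q.1, y) ∉ K := by
  obtain ⟨p, hp⟩ := hne
  have hline : IsCompact (K ∩ Prod.fst ⁻¹' {p.1}) :=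
    hK.inter_right (isClosed_singleton.preimage continuous_fst)
  obtain ⟨q, ⟨hqK, hq1⟩, hmax⟩ :=
    hline.exists_isMaxOn ⟨p, hp, rfl⟩ continuous_snd.continuousOn
  exact ⟨q, hqK, fun y hy hyK => hy.not_ge (hmax ⟨hyK, hq1⟩)⟩

theorem IsCompact.exists_mem_notMem_below [T1Space X] (hK : IsCompact K) (hne : K.Nonempty) :
    ∃ q ∈ K, ∀ y, y < q.2 → (q.1, y) ∉ K := by
  obtain ⟨p, hp⟩ := hne
  have hline : IsCompact (K ∩ Prod.fst ⁻¹' {p.1}) :=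
    hK.inter_right (isClosed_singleton.preimage continuous_fst)
  obtain ⟨q, ⟨hqK, hq1⟩, hmin⟩ :=
    hline.exists_isMinOn ⟨p, hp, rfl⟩ continuous_snd.continuousOn
  exact ⟨q, hqK, fun y hy hyK => hy.not_ge (hmin ⟨hyK, hq1⟩)⟩

end Extremal

section Comparison

variable {X : Type*} [TopologicalSpace X] [T2Space X] [LocallyPathConnectedSpace X]
  {M N : Set (X × ℝ)}

theorem subset_endRegion_atTop_or (hMc : IsCompact M) (hNc : IsCompact N) (hM : IsPreconnected M)
    (hN : IsPreconnected N) (hMN : Disjoint M N) (hne : (M ∪ N).Nonempty) :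
    N ⊆ endRegion atTop M ∨ M ⊆ endRegion atTop N := by
  obtain ⟨q, hq, hq_top⟩ := (hMc.union hNc).exists_mem_notMem_above hne
  rcases hq with hqM | hqN
  · exact .inr <| hM.subset_endRegion hNc.isClosed hMN hqM <| mem_endRegion_atTop_of_ray
      (hMN.notMem_of_mem_left hqM) fun y hy hyN => hq_top y hy (.inr hyN)
  · exact .inl <| hN.subset_endRegion hMc.isClosed hMN.symm hqN <| mem_endRegion_atTop_of_ray
      (hMN.notMem_of_mem_right hqN) fun y hy hyM => hq_top y hy (.inl hyM)

theorem subset_endRegion_atBot_or (hMc : IsCompact M) (hNc : IsCompact N) (hM : IsPreconnected M)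
    (hN : IsPreconnected N) (hMN : Disjoint M N) (hne : (M ∪ N).Nonempty) :
    N ⊆ endRegion atBot M ∨ M ⊆ endRegion atBot N := by
  obtain ⟨q, hq, hq_bot⟩ := (hMc.union hNc).exists_mem_notMem_below hne
  rcases hq with hqM | hqN
  · exact .inr <| hM.subset_endRegion hNc.isClosed hMN hqM <| mem_endRegion_atBot_of_ray
      (hMN.notMem_of_mem_left hqM) fun y hy hyN => hq_bot y hy (.inr hyN)
  · exact .inl <| hN.subset_endRegion hMc.isClosed hMN.symm hqN <| mem_endRegion_atBot_of_ray
      (hMN.notMem_of_mem_right hqN) fun y hy hyM => hq_bot y hy (.inl hyM)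

end Comparison

theorem Separating.disjoint_leftRegion_rightRegion {M : Set Ann} (hM : Separating M) :
    Disjoint (leftRegion M) (rightRegion M) := by
  refine Set.disjoint_left.mpr fun p ⟨_, γ₁, hγ₁c, hγ₁0, hγ₁M, hγ₁l⟩
    ⟨_, γ₂, hγ₂c, hγ₂0, hγ₂M, hγ₂l⟩ => ?_
  let δ : ℝ → Ann := fun t => if t ≤ 0 then γ₁ (-t) else γ₂ t
  have hδc : Continuous δ :=
    Continuous.if_le (hγ₁c.comp continuous_neg) hγ₂c continuous_id continuous_const
      fun t ht => by simp [ht, hγ₁0, hγ₂0]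
  have hδ_top : Tendsto (fun t => (δ t).2) atTop atTop := by
    refine hγ₂l.congr' ?_
    filter_upwards [eventually_gt_atTop 0] with t ht
    simp [δ, not_le.mpr ht]
  have hδ_bot : Tendsto (fun t => (δ t).2) atBot atBot := by
    refine (hγ₁l.comp tendsto_neg_atBot_atTop).congr' ?_
    filter_upwards [eventually_le_atBot 0] with t ht
    simp [δ, ht]
  obtain ⟨t, ht⟩ := hM δ hδc hδ_top hδ_bot
  by_cases ht0 : t ≤ 0
  · exact hγ₁M (-t) (by simpa [δ, ht0] using ht)
  · exact hγ₂M t (by simpa [δ, ht0] using ht)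

/-- Ordering of disjoint separators: if `M₁, M₂` are disjoint separators then either
`M₁ ⊂ A_L(M₂)` or `M₁ ⊂ A_R(M₂)`; moreover `M₁ ⊂ A_L(M₂)` implies `M₂ ⊂ A_R(M₁)`. -/
theorem stmt5 (M₁ M₂ : Set Ann) (h1 : IsSeparator M₁) (h2 : IsSeparator M₂)
    (hd : Disjoint M₁ M₂) :
    (M₁ ⊆ leftRegion M₂ ∨ M₁ ⊆ rightRegion M₂) ∧
    (M₁ ⊆ leftRegion M₂ → M₂ ⊆ rightRegion M₁) := by
  obtain ⟨hc₁, hconn₁, hsep₁⟩ := h1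
  obtain ⟨hc₂, hconn₂, hsep₂⟩ := h2
  obtain ⟨p₁, hp₁⟩ := hconn₁.nonempty
  obtain ⟨p₂, hp₂⟩ := hconn₂.nonempty
  have hne : (M₁ ∪ M₂).Nonempty := ⟨p₁, .inl hp₁⟩
  have htop :=
    subset_endRegion_atTop_or hc₁ hc₂ hconn₁.isPreconnected hconn₂.isPreconnected hd hne
  have hbot :=
    subset_endRegion_atBot_or hc₁ hc₂ hconn₁.isPreconnected hconn₂.isPreconnected hd hne
  refine ⟨?_, fun hL => htop.resolve_right fun hR => ?_⟩
  · rcases htop with hR₁ | hR₂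
    · exact .inl <| hbot.resolve_left fun hL₁ =>
        hsep₁.disjoint_leftRegion_rightRegion.notMem_of_mem_left (hL₁ hp₂) (hR₁ hp₂)
    · exact .inr hR₂
  · exact hsep₂.disjoint_leftRegion_rightRegion.notMem_of_mem_left (hL hp₁) (hR hp₁)
end
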